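/- Let (X, μ) be a measure space with μ finite, let q ∈ (1,2], and let v : X → ℝ be in L^q(μ) with ∫_X v dμ = 0. Then ∫_X |1 + v|^q dμ ≤ μ(X) + (1 + (q−1)^{q−1}) · ∫_X |v|^q dμ. (Subcritical convexity inequality used to identify the optimal lower-order constant in the p-power fractional Sobolev inequality in the case p_s^* ≤ 2.) -/

import Mathlib

/-!
Integrate the pointwise bound `|1 + t|^q ≤ 1 + q t + (1 + (q-1)^(q-1)) |t|^q`; the linear term
vanishes because `v` has mean zero. For `t ≥ -1` Bernoulli's inequality gives
`(1 + t)^q ≤ (1 + t)(1 + (q-1) t) ≤ 1 + q t + |t|^q` when `|t| ≤ 1`, and the case `t > 1` reduces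
to this one applied to `1/t`. For `t < -1` one has `|1 + t|^q ≤ |t|^q`, and the linear term
`q t` is absorbed by `(q-1)^(q-1) |t|^q` through a Young-type inequality.
-/

open MeasureTheory

namespace Real

theorem one_add_rpow_le_of_abs_le_one {q s : ℝ} (hq₁ : 1 ≤ q) (hq₂ : q ≤ 2) (hs : |s| ≤ 1) :
    (1 + s) ^ q ≤ 1 + q * s + |s| ^ q := by
  obtain ⟨hs₁, hs₂⟩ := abs_le.1 hs
  have hbern : (1 + s) ^ (q - 1) ≤ 1 + (q - 1) * s :=
    rpow_one_add_le_one_add_mul_self hs₁ (by linarith) (by linarith)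
  have hsq : s ^ 2 ≤ |s| ^ q := by
    rw [← sq_abs, ← rpow_two]
    exact rpow_le_rpow_of_exponent_ge' (abs_nonneg s) hs (by linarith) hq₂
  calc (1 + s) ^ q = (1 + s) ^ (1 : ℝ) * (1 + s) ^ (q - 1) := by
        rw [← rpow_add' (by linarith) (by linarith), add_sub_cancel]
    _ ≤ (1 + s) * (1 + (q - 1) * s) := by
        rw [rpow_one]; exact mul_le_mul_of_nonneg_left hbern (by linarith)
    _ = 1 + q * s + (q - 1) * s ^ 2 := by ring
    _ ≤ 1 + q * s + |s| ^ q := by nlinarith [sq_nonneg s]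

theorem one_add_rpow_le_of_one_le {q t : ℝ} (hq₁ : 1 ≤ q) (hq₂ : q ≤ 2) (ht : 1 ≤ t) :
    (1 + t) ^ q ≤ 1 + q * t + t ^ q := by
  have ht₀ : 0 < t := by linarith
  have hinv : |t⁻¹| ≤ 1 := by
    rw [abs_of_pos (inv_pos.2 ht₀)]; exact inv_le_one_of_one_le₀ ht
  have hsmall := one_add_rpow_le_of_abs_le_one hq₁ hq₂ hinv
  rw [abs_of_pos (inv_pos.2 ht₀)] at hsmall
  have hpow : t ^ (q - 1) ≤ t := by
    simpa using rpow_le_rpow_of_exponent_le ht (show q - 1 ≤ 1 by linarith)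
  have htq : 0 ≤ t ^ q := rpow_nonneg ht₀.le q
  calc (1 + t) ^ q = t ^ q * (1 + t⁻¹) ^ q := by
        rw [← mul_rpow ht₀.le (by positivity), mul_add, mul_inv_cancel₀ ht₀.ne', mul_one, add_comm]
    _ ≤ t ^ q * (1 + q * t⁻¹ + t⁻¹ ^ q) := mul_le_mul_of_nonneg_left hsmall htq
    _ = 1 + q * t ^ (q - 1) + t ^ q := by
        rw [inv_rpow ht₀.le, rpow_sub_one ht₀.ne']; field_simp; ring
    _ ≤ 1 + q * t + t ^ q := by nlinarith

theorem one_add_rpow_le_of_neg_one_le {q t : ℝ} (hq₁ : 1 ≤ q) (hq₂ : q ≤ 2) (ht : -1 ≤ t) :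
    (1 + t) ^ q ≤ 1 + q * t + |t| ^ q := by
  rcases le_or_gt |t| 1 with hsmall | hlarge
  · exact one_add_rpow_le_of_abs_le_one hq₁ hq₂ hsmall
  · have ht₁ : 1 ≤ t := by
      rcases lt_abs.1 hlarge with h | h <;> linarith
    rw [abs_of_pos (by linarith : 0 < t)]
    exact one_add_rpow_le_of_one_le hq₁ hq₂ ht₁

/-- The tangent line of `s ↦ 1 + (q-1)^(q-1) s^q` at its minimum `s = 1/(q-1)`; after the
substitution `u = (q-1) s` this is Bernoulli's inequality `1 + q (u - 1) ≤ u^q`. -/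
theorem mul_le_one_add_rpow {q s : ℝ} (hq : 1 < q) (hs : 0 ≤ s) :
    q * s ≤ 1 + (q - 1) ^ (q - 1) * s ^ q := by
  have hq₀ : 0 < q - 1 := by linarith
  have hbern : 1 + q * ((q - 1) * s - 1) ≤ (1 + ((q - 1) * s - 1)) ^ q :=
    one_add_mul_self_le_rpow_one_add (by nlinarith) hq.le
  have hu : ((q - 1) * s) ^ q = (q - 1) * ((q - 1) ^ (q - 1) * s ^ q) := by
    rw [mul_rpow hq₀.le hs, rpow_sub_one hq₀.ne']; field_simp
  rw [add_sub_cancel, hu] at hbern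
  nlinarith

theorem abs_one_add_rpow_le {q : ℝ} (hq₁ : 1 < q) (hq₂ : q ≤ 2) (t : ℝ) :
    |1 + t| ^ q ≤ 1 + q * t + (1 + (q - 1) ^ (q - 1)) * |t| ^ q := by
  have hC : 0 ≤ (q - 1) ^ (q - 1) * |t| ^ q := by positivity
  rcases le_or_gt (-1) t with ht | ht
  · rw [abs_of_nonneg (by linarith : 0 ≤ 1 + t)]
    nlinarith [one_add_rpow_le_of_neg_one_le hq₁.le hq₂ ht]
  · have habs : |1 + t| ≤ |t| := by
      rw [abs_of_neg (by linarith), abs_of_neg (by linarith)]; linarith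
    have hmono : |1 + t| ^ q ≤ |t| ^ q := rpow_le_rpow (abs_nonneg _) habs (by linarith)
    have hyoung := mul_le_one_add_rpow hq₁ (abs_nonneg t)
    rw [abs_of_neg (by linarith : t < 0)] at hyoung hmono ⊢
    nlinarith

end Real

theorem MeasureTheory.MemLp.integrable_abs_rpow {X : Type*} [MeasurableSpace X] {μ : Measure X}
    {v : X → ℝ} {q : ℝ} (hv : MemLp v (ENNReal.ofReal q) μ) (hq : 0 < q) :
    Integrable (fun x => |v x| ^ q) μ := by
  simpa [ENNReal.toReal_ofReal hq.le] using
    hv.integrable_norm_rpow (by simpa using hq) ENNReal.ofReal_ne_top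

/-- Subcritical convexity inequality: for a finite measure `μ`, `q ∈ (1,2]`, and
`v ∈ L^q(μ)` with `∫ v dμ = 0`,
`∫ |1+v|^q dμ ≤ μ(X) + (1 + (q-1)^{q-1}) ∫ |v|^q dμ`. -/
theorem stmt_13 {X : Type*} [MeasurableSpace X] (μ : Measure X) [IsFiniteMeasure μ]
    (q : ℝ) (hq : q ∈ Set.Ioc (1 : ℝ) 2)
    (v : X → ℝ) (hv : MemLp v (ENNReal.ofReal q) μ) (hmean : ∫ x, v x ∂μ = 0) :
    ∫ x, |1 + v x| ^ q ∂μ ≤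
      (μ Set.univ).toReal + (1 + (q - 1) ^ (q - 1)) * ∫ x, |v x| ^ q ∂μ := by
  obtain ⟨hq₁, hq₂⟩ := hq
  have hv₁ : Integrable v μ := hv.integrable (by simpa using hq₁.le)
  have hvq := hv.integrable_abs_rpow (by linarith)
  have hlin : Integrable (fun x => 1 + q * v x) μ := (integrable_const 1).add (hv₁.const_mul q)
  have h1v : MemLp (fun x => 1 + v x) (ENNReal.ofReal q) μ :=
    (memLp_const (1 : ℝ) : MemLp (fun _ : X => (1 : ℝ)) _ μ).add hv
  calc ∫ x, |1 + v x| ^ q ∂μ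
      ≤ ∫ x, (1 + q * v x + (1 + (q - 1) ^ (q - 1)) * |v x| ^ q) ∂μ :=
        integral_mono (h1v.integrable_abs_rpow (by linarith)) (hlin.add (hvq.const_mul _))
          fun x => Real.abs_one_add_rpow_le hq₁ hq₂ (v x)
    _ = μ.real Set.univ + q * ∫ x, v x ∂μ + (1 + (q - 1) ^ (q - 1)) * ∫ x, |v x| ^ q ∂μ := by
        rw [integral_add hlin (hvq.const_mul _), integral_add (integrable_const 1) (hv₁.const_mul q),
          integral_const, integral_const_mul, integral_const_mul, smul_eq_mul, mul_one]
    _ = (μ Set.univ).toReal + (1 + (q - 1) ^ (q - 1)) * ∫ x, |v x| ^ q ∂μ := by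
        rw [hmean, mul_zero, add_zero, Measure.real]
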